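/- Let n ≥ 2 and 1 ≤ r < n be integers and let h be a homeomorphism of 𝔠_{n,r} that preserves tail equivalence (x ∼ y iff h(x) ∼ h(y)). Then there exist words ν and η such that ν and η are incomparable, U_ν ∪ U_η ≠ 𝔠_{n,r}, and h acts in the same fashion on U_ν and U_η. -/

import Mathlib

open Set

namespace HigmanAut

/-- The one-sided infinite sequence space `𝔠_n` on `n` letters. -/
abbrev Cn (n : ℕ) : Type := ℕ → Fin n

/-- The Cantor space `𝔠_{n,r} = Fin r × (ℕ → Fin n)` (with the product topology,
`Fin r` and `Fin n` discrete). -/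
abbrev CNR (n r : ℕ) : Type := Fin r × Cn n

/-- A word: a letter from `Fin r` together with a finite list over `Fin n`. -/
abbrev Word (n r : ℕ) : Type := Fin r × List (Fin n)

/-- Self-homeomorphisms of `𝔠_{n,r}`. -/
abbrev Homeo (n r : ℕ) : Type := CNR n r ≃ₜ CNR n r

/-- Append a finite list to a word: `ν⌢w`. -/
def wApp {n r : ℕ} (ν : Word n r) (w : List (Fin n)) : Word n r := (ν.1, ν.2 ++ w)

/-- The point `ν⌢x` of `𝔠_{n,r}` determined by a word `ν` followed by `x ∈ 𝔠_n`. -/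
def wCat {n r : ℕ} (ν : Word n r) (x : Cn n) : CNR n r :=
  (ν.1, fun i => if h : i < ν.2.length then ν.2.get ⟨i, h⟩ else x (i - ν.2.length))

/-- The cone `U_ν` of a word `ν`. -/
def cone {n r : ℕ} (ν : Word n r) : Set (CNR n r) :=
  {p | p.1 = ν.1 ∧ ∀ (i : ℕ) (h : i < ν.2.length), p.2 i = ν.2.get ⟨i, h⟩}

/-- Membership in the Higman--Thompson group `G_{n,r}`: `g` is a prefix code map,
i.e. there are `k ≥ 1` and words `ν i`, `η i` whose cones partition `𝔠_{n,r}`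
with `g(ν i ⌢ x) = η i ⌢ x` for all `i`, `x`. -/
def IsHigman {n r : ℕ} (g : Homeo n r) : Prop :=
  ∃ k : ℕ, 0 < k ∧ ∃ ν η : Fin k → Word n r,
    (∀ p : CNR n r, ∃! i : Fin k, p ∈ cone (ν i)) ∧
    (∀ p : CNR n r, ∃! i : Fin k, p ∈ cone (η i)) ∧
    (∀ (i : Fin k) (x : Cn n), g (wCat (ν i) x) = wCat (η i) x)

/-- The Higman--Thompson group `G_{n,r}` as a set of homeomorphisms. -/
def higmanSet (n r : ℕ) : Set (Homeo n r) := {g | IsHigman g}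

/-- Conjugation: in the paper's right-action notation this is `g ↦ h⁻¹ g h`
(as a left function, `x ↦ h (g (h⁻¹ x))`). -/
def conjH {n r : ℕ} (h g : Homeo n r) : Homeo n r := (h.symm.trans g).trans h

/-- `h` acts in the same fashion on `U_α` and `U_β`: there are words `α'`, `β'`
and a common local action `f` with `h(α⌢x) = α'⌢f(x)` and `h(β⌢x) = β'⌢f(x)`. -/
def SameFashion {n r : ℕ} (h : Homeo n r) (α β : Word n r) : Prop :=
  ∃ (α' β' : Word n r) (f : Cn n → Cn n),
    (∀ x : Cn n, h (wCat α x) = wCat α' (f x)) ∧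
    (∀ x : Cn n, h (wCat β x) = wCat β' (f x))

/-- Tail equivalence on `𝔠_{n,r}`. -/
def TailEq {n r : ℕ} (x y : CNR n r) : Prop :=
  ∃ (ν η : Word n r) (z : Cn n), x = wCat ν z ∧ y = wCat η z

/-- `h` is pointwise canonical. -/
def PtwiseCanonical {n r : ℕ} (h : Homeo n r) : Prop :=
  ∀ x : CNR n r, ∃ (η₁ η₂ : Word n r) (y : Cn n), x = wCat η₁ y ∧ h x = wCat η₂ y

/-- `h` is densely canonical. -/
def DenselyCanonical {n r : ℕ} (h : Homeo n r) : Prop :=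
  ∀ U : Set (CNR n r), IsOpen U → U.Nonempty →
    ∃ η ζ : Word n r, cone η ⊆ U ∧ ∀ x : Cn n, h (wCat η x) = wCat ζ x

/-- `h` belongs to `H_{n,r,∼}`: `x ∼ y` iff `h(x) ∼ h(y)`. -/
def PreservesTailEq {n r : ℕ} (h : Homeo n r) : Prop :=
  ∀ x y : CNR n r, TailEq x y ↔ TailEq (h x) (h y)

/-- `ν` is a prefix of `η`, i.e. `U_η ⊆ U_ν`. -/
def WPrefix {n r : ℕ} (ν η : Word n r) : Prop := cone η ⊆ cone ν

/-- Two words are incomparable if neither is a prefix of the other. -/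
def Incomp {n r : ℕ} (ν η : Word n r) : Prop := ¬ WPrefix ν η ∧ ¬ WPrefix η ν

/-!
Take the incomparable words `ν₀ = (c, [a, a])` and `η₀ = (c, [a, b])`, whose cones miss
`(c, bbb…)`. For every
`x`, the points `ν₀⌢x` and `η₀⌢x` are tail equivalent, hence so are their images under `h`:
some shift by `k` of `h(ν₀⌢x)` equals some shift by `l` of `h(η₀⌢x)`. The sets of `x` realising
a given pair `(k, l)` are closed and cover `𝔠_n`, so by the Baire category theorem one of them
contains a cylinder; shrinking it, the first `k` (resp. `l`) letters of the two images are
constant there as well. If `w` is the stem of that cylinder, `h` acts in the same fashion on the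
cones of `ν₀⌢w` and `η₀⌢w`.
-/

def listCat {n : ℕ} (w : List (Fin n)) (x : Cn n) : Cn n :=
  fun i => if h : i < w.length then w[i] else x (i - w.length)

def prefixWord {n r : ℕ} (p : CNR n r) (k : ℕ) : Word n r :=
  (p.1, List.ofFn fun j : Fin k => p.2 j)

section

variable {n r : ℕ}

lemma listCat_of_lt (w : List (Fin n)) (x : Cn n) {i : ℕ} (hi : i < w.length) :
    listCat w x i = w[i] := dif_pos hi

@[simp]
lemma listCat_length_add (w : List (Fin n)) (x : Cn n) (i : ℕ) :
    listCat w x (w.length + i) = x i := by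
  simp [listCat]

lemma listCat_append (u w : List (Fin n)) (x : Cn n) :
    listCat (u ++ w) x = listCat u (listCat w x) := by
  funext i
  simp only [listCat, List.length_append]
  by_cases hu : i < u.length
  · simp [hu, List.getElem_append_left, show i < u.length + w.length by omega]
  · by_cases hw : i < u.length + w.length
    · simp [hu, hw, List.getElem_append_right (Nat.le_of_not_lt hu),
        show i - u.length < w.length by omega]
    · simp only [hu, hw, dite_false, show ¬ i - u.length < w.length by omega]
      congr 1
      omega

lemma wCat_eq (ν : Word n r) (x : Cn n) : wCat ν x = (ν.1, listCat ν.2 x) := rfl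

lemma wCat_wApp (ν : Word n r) (w : List (Fin n)) (x : Cn n) :
    wCat (wApp ν w) x = wCat ν (listCat w x) := by
  simp [wCat_eq, wApp, listCat_append]

lemma continuous_wCat (ν : Word n r) : Continuous (wCat ν) := by
  refine continuous_const.prodMk (continuous_pi fun i => ?_)
  by_cases h : i < ν.2.length
  · simpa [h] using continuous_const
  · simpa [h] using continuous_apply (i - ν.2.length)

lemma wCat_mem_cone (ν : Word n r) (x : Cn n) : wCat ν x ∈ cone ν :=
  ⟨rfl, fun i hi => by simp [wCat, hi]⟩

lemma eq_wCat_of_mem_cone {ν : Word n r} {p : CNR n r} (hp : p ∈ cone ν) :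
    p = wCat ν (fun i => p.2 (ν.2.length + i)) := by
  refine Prod.ext hp.1 (funext fun i => ?_)
  by_cases hi : i < ν.2.length
  · simp [wCat, hi, hp.2 i hi]
  · simp only [wCat, hi, dite_false]
    rw [Nat.add_sub_cancel' (Nat.le_of_not_lt hi)]

lemma isOpen_cone (ν : Word n r) : IsOpen (cone ν) := by
  have hcone : cone ν = (fun p : CNR n r => (p.1, fun i : Fin ν.2.length => p.2 i)) ⁻¹'
      {(ν.1, fun i => ν.2.get i)} := by
    ext p
    simp [cone, funext_iff, Fin.forall_iff]
  rw [hcone]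
  exact (isOpen_discrete _).preimage (by fun_prop)

lemma cone_wApp_subset (ν : Word n r) (w : List (Fin n)) : cone (wApp ν w) ⊆ cone ν :=
  fun p hp => ⟨hp.1, fun i hi => by
    simpa [wApp, List.getElem_append_left hi] using hp.2 i (by simp [wApp]; omega)⟩

lemma mem_cone_prefixWord (p : CNR n r) (k : ℕ) : p ∈ cone (prefixWord p k) :=
  ⟨rfl, fun i hi => by simp [prefixWord]⟩

@[simp]
lemma length_prefixWord (p : CNR n r) (k : ℕ) : (prefixWord p k).2.length = k := by
  simp [prefixWord]

lemma disjoint_cone_of_getElem_ne {ν η : Word n r} {i : ℕ} (hν : i < ν.2.length)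
    (hη : i < η.2.length) (hne : ν.2[i] ≠ η.2[i]) : Disjoint (cone ν) (cone η) :=
  Set.disjoint_left.mpr fun _ hp hq => hne (by simpa using (hp.2 i hν).symm.trans (hq.2 i hη))

lemma incomp_of_disjoint [NeZero n] {ν η : Word n r} (hd : Disjoint (cone ν) (cone η)) :
    Incomp ν η :=
  ⟨fun hsub => Set.disjoint_left.mp hd (hsub (wCat_mem_cone η default)) (wCat_mem_cone η default),
   fun hsub => Set.disjoint_left.mp hd (wCat_mem_cone ν default) (hsub (wCat_mem_cone ν default))⟩

lemma exists_listCat_mem {U : Set (Cn n)} (hU : IsOpen U) {x : Cn n} (hx : x ∈ U) :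
    ∃ w : List (Fin n), ∀ z, listCat w z ∈ U := by
  obtain ⟨I, u, hu, hsub⟩ := isOpen_pi_iff.mp hU x hx
  refine ⟨List.ofFn fun i : Fin (I.sup id + 1) => x i, fun z => hsub fun i hi => ?_⟩
  have hi' : i < I.sup id + 1 := Nat.lt_succ_of_le (Finset.le_sup (f := id) hi)
  rw [listCat_of_lt _ _ (by simpa using hi'), List.getElem_ofFn]
  exact (hu i hi).2

lemma TailEq.exists_shift_eq {p q : CNR n r} (hpq : TailEq p q) :
    ∃ k l : ℕ, ∀ i, p.2 (k + i) = q.2 (l + i) := by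
  obtain ⟨ν, η, z, rfl, rfl⟩ := hpq
  exact ⟨ν.2.length, η.2.length, fun i => by simp [wCat_eq]⟩

lemma exists_isOpen_shift_eq {X : Type*} [TopologicalSpace X] [BaireSpace X] [Nonempty X]
    {F G : X → CNR n r} (hF : Continuous F) (hG : Continuous G)
    (htail : ∀ x, TailEq (F x) (G x)) :
    ∃ k l : ℕ, ∃ U : Set X, IsOpen U ∧ U.Nonempty ∧
      ∀ x ∈ U, ∀ i, (F x).2 (k + i) = (G x).2 (l + i) := by
  let A : ℕ × ℕ → Set X := fun kl => {x | ∀ i, (F x).2 (kl.1 + i) = (G x).2 (kl.2 + i)}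
  have hclosed : ∀ kl, IsClosed (A kl) := fun kl => by
    simp only [A, Set.ofPred_forall]
    exact isClosed_iInter fun i => isClosed_eq (by fun_prop) (by fun_prop)
  have hcover : ⋃ kl, A kl = Set.univ := Set.eq_univ_of_forall fun x => by
    obtain ⟨k, l, hkl⟩ := (htail x).exists_shift_eq
    exact Set.mem_iUnion.mpr ⟨(k, l), hkl⟩
  obtain ⟨⟨k, l⟩, hne⟩ := nonempty_interior_of_iUnion_of_closed hclosed hcover
  exact ⟨k, l, _, isOpen_interior, hne, fun x hx => interior_subset hx⟩

theorem PreservesTailEq.exists_sameFashion_wApp [NeZero n] {h : Homeo n r}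
    (hpres : PreservesTailEq h) (ν η : Word n r) :
    ∃ w : List (Fin n), SameFashion h (wApp ν w) (wApp η w) := by
  let F : Cn n → CNR n r := fun x => h (wCat ν x)
  let G : Cn n → CNR n r := fun x => h (wCat η x)
  have hF : Continuous F := h.continuous.comp (continuous_wCat ν)
  have hG : Continuous G := h.continuous.comp (continuous_wCat η)
  obtain ⟨k, l, U, hU, ⟨x₁, hx₁⟩, hshift⟩ := exists_isOpen_shift_eq hF hG
    fun x => (hpres _ _).mp ⟨ν, η, x, rfl, rfl⟩
  let α := prefixWord (F x₁) k
  let β := prefixWord (G x₁) l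
  have hV : IsOpen (U ∩ F ⁻¹' cone α ∩ G ⁻¹' cone β) :=
    (hU.inter ((isOpen_cone α).preimage hF)).inter ((isOpen_cone β).preimage hG)
  obtain ⟨w, hw⟩ := exists_listCat_mem hV ⟨⟨hx₁, mem_cone_prefixWord _ _⟩, mem_cone_prefixWord _ _⟩
  refine ⟨w, α, β, fun z i => (F (listCat w z)).2 (k + i), fun z => ?_, fun z => ?_⟩
  · rw [wCat_wApp]
    simpa [α] using eq_wCat_of_mem_cone (hw z).1.2
  · dsimp only
    rw [wCat_wApp, funext (hshift _ (hw z).1.1)]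
    simpa [β] using eq_wCat_of_mem_cone (hw z).2

end

theorem preserves_tailEq_same_fashion_somewhere_general (n r : ℕ) (hn : 2 ≤ n)
    (hr1 : 1 ≤ r) (h : Homeo n r) (hpres : PreservesTailEq h) :
    ∃ ν η : Word n r, Incomp ν η ∧ cone ν ∪ cone η ≠ Set.univ ∧
      SameFashion h ν η := by
  have : NeZero n := ⟨by omega⟩
  let c : Fin r := ⟨0, hr1⟩
  let a : Fin n := ⟨0, by omega⟩
  let b : Fin n := ⟨1, by omega⟩
  have hab : a ≠ b := by simp [a, b, Fin.ext_iff]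
  obtain ⟨w, hw⟩ := hpres.exists_sameFashion_wApp (c, [a, a]) (c, [a, b])
  have hdisj : Disjoint (cone (c, [a, a])) (cone (c, [a, b])) :=
    disjoint_cone_of_getElem_ne (i := 1) (by simp) (by simp) (by simpa using hab)
  have hmiss : ∀ u, (c, fun _ => b) ∉ cone (c, a :: u) :=
    fun u hp => hab (by simpa using (hp.2 0 (by simp)).symm)
  refine ⟨_, _, incomp_of_disjoint (hdisj.mono (cone_wApp_subset _ _) (cone_wApp_subset _ _)),
    fun hU => ?_, hw⟩
  rcases hU.symm ▸ Set.mem_univ (c, fun _ => b) with hp | hp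
  · exact hmiss [a] (cone_wApp_subset _ _ hp)
  · exact hmiss [b] (cone_wApp_subset _ _ hp)

/-- If `h` preserves tail equivalence then there are incomparable
words `ν`, `η` with `U_ν ∪ U_η ≠ 𝔠_{n,r}` on whose cones `h` acts in the same
fashion. -/
theorem preserves_tailEq_same_fashion_somewhere (n r : ℕ) (hn : 2 ≤ n)
    (hr1 : 1 ≤ r) (hrn : r < n) (h : Homeo n r) (hpres : PreservesTailEq h) :
    ∃ ν η : Word n r, Incomp ν η ∧ cone ν ∪ cone η ≠ Set.univ ∧
      SameFashion h ν η :=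
  preserves_tailEq_same_fashion_somewhere_general n r hn hr1 h hpres

end HigmanAut
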